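/- For r ≥ 2, the two-variable Schur polynomial specialization S_{r,r}(x_2 + 3x_1 − 2x_2 − (x_1+x_2)) satisfies S_{r,r}({x_2, 3x_1} − {2x_2, x_1+x_2}) = −3^{r−2}(x_2 − 2x_1)(x_1 x_2)^{r−1}(3x_1 − 2x_2). -/

import Mathlib

open scoped Classical

noncomputable section

/-- The generating series `∏_{a ∈ A} (1 - a z)` of an alphabet `A`. -/
def genS {R : Type*} [CommRing R] (A : Multiset R) : PowerSeries R :=
  (A.map (fun a => 1 - PowerSeries.C a * PowerSeries.X)).prod

/-- The complete function `S_j(A - B)` of a difference of alphabets, defined by the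
generating series `∑ S_j(A-B) z^j = ∏_{b∈B}(1-bz) / ∏_{a∈A}(1-az)`. -/
def SD {R : Type*} [CommRing R] (A B : Multiset R) (j : ℤ) : R :=
  if j < 0 then 0
  else PowerSeries.coeff j.toNat (genS B * PowerSeries.invOfUnit (genS A) 1)

/-- The Schur function `S_I(A - B)` for an index sequence `I` (written in the weakly
increasing convention), given by the Jacobi–Trudi determinant `|S_{i_q + q - p}(A-B)|`. -/
def SchurD {R : Type*} [CommRing R] (A B : Multiset R) {s : ℕ} (I : Fin s → ℕ) : R :=
  Matrix.det (Matrix.of fun p q : Fin s => SD A B ((I q : ℤ) + (q : ℤ) - (p : ℤ)))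

/-- The resultant `R(A,B) = ∏_{a∈A, b∈B} (a - b)` of two alphabets. -/
def Res {R : Type*} [CommRing R] (A B : Multiset R) : R :=
  (A.map (fun a => (B.map (fun b => a - b)).prod)).prod

/-! With `A = {a, b}`, comparing coefficients in `∏_{a∈A}(1 - az) · ∑ S_j(A-B) z^j = ∏_{b∈B}(1 - bz)`
shows that for `|B| = 2` the complete functions satisfy `S_{j+1} = (a + b) S_j - ab S_{j-1}` once
`j ≥ 2`. The Jacobi–Trudi determinant `S_{(r,r)} = S_r² - S_{r+1} S_{r-1}` is the Casoratian of
this recurrence, so it gains a factor `ab` at each step; at `r = 2` a direct computation gives the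
resultant, so `S_{(r,r)}(A - B) = (ab)^{r-2} R(A, B)`. -/

open PowerSeries

section

variable {R : Type*} [CommRing R]

def completeSeries (A B : Multiset R) : R⟦X⟧ :=
  genS B * invOfUnit (genS A) 1

theorem SD_natCast (A B : Multiset R) (n : ℕ) : SD A B n = coeff n (completeSeries A B) := by
  simp [SD, completeSeries]

theorem constantCoeff_genS (A : Multiset R) : constantCoeff (genS A) = 1 := by
  simp [genS, map_multiset_prod, Multiset.map_map]

theorem constantCoeff_completeSeries (A B : Multiset R) :
    constantCoeff (completeSeries A B) = 1 := by
  simp [completeSeries, constantCoeff_genS]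

theorem genS_mul_completeSeries (A B : Multiset R) :
    genS A * completeSeries A B = genS B := by
  rw [completeSeries, mul_left_comm,
    mul_invOfUnit _ _ (by simpa using constantCoeff_genS A), mul_one]

theorem genS_pair (a b : R) :
    genS ({a, b} : Multiset R) = 1 - C (a + b) * X + C (a * b) * X ^ 2 := by
  simp only [genS, Multiset.insert_eq_cons, Multiset.map_cons, Multiset.map_singleton,
    Multiset.prod_cons, Multiset.prod_singleton, map_add, map_mul]
  ring

theorem coeff_genS_pair_mul (a b : R) (f : R⟦X⟧) (n : ℕ) :
    coeff n (genS {a, b} * f) = coeff n f - (a + b) * (if 1 ≤ n then coeff (n - 1) f else 0)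
      + a * b * (if 2 ≤ n then coeff (n - 2) f else 0) := by
  rw [genS_pair, add_mul, sub_mul, one_mul, mul_assoc, mul_assoc, map_add, map_sub,
    coeff_C_mul, coeff_C_mul, coeff_X_pow_mul', ← pow_one X, coeff_X_pow_mul']

theorem Res_pair_pair (a b c d : R) :
    Res {a, b} {c, d} = (a - c) * (a - d) * ((b - c) * (b - d)) := by
  simp only [Res, Multiset.insert_eq_cons, Multiset.map_cons, Multiset.map_singleton,
    Multiset.prod_cons, Multiset.prod_singleton]

theorem casoratian_of_recurrence {s : ℕ → R} {p q : R}
    (hs : ∀ n, s (n + 2) = p * s (n + 1) - q * s n) (n : ℕ) :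
    s (n + 1) ^ 2 - s (n + 2) * s n = q ^ n * (s 1 ^ 2 - s 2 * s 0) := by
  induction n with
  | zero => ring
  | succ n ih => linear_combination q * ih + s (n + 2) * hs n - s (n + 1) * hs (n + 1)

theorem SchurD_two_rows (A B : Multiset R) (n : ℕ) :
    SchurD A B (fun _ : Fin 2 => n + 1)
      = coeff (n + 1) (completeSeries A B) ^ 2
        - coeff (n + 2) (completeSeries A B) * coeff n (completeSeries A B) := by
  rw [SchurD, Matrix.det_fin_two]
  simp only [Matrix.of_apply, Fin.val_zero, Fin.val_one]
  rw [show ((n + 1 : ℕ) : ℤ) + (1 : ℕ) - (0 : ℕ) = (n + 2 : ℕ) by push_cast; ring,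
    show ((n + 1 : ℕ) : ℤ) + (0 : ℕ) - (1 : ℕ) = (n : ℕ) by push_cast; ring]
  simp only [Nat.cast_zero, Nat.cast_one, add_zero, sub_zero, add_sub_cancel_right, SD_natCast]
  ring

section PairPair

variable (a b c d : R)

-- The right side is written `genS {c, d} * 1` so that `coeff_genS_pair_mul` expands both sides.
theorem coeff_genS_pair_mul_completeSeries (n : ℕ) :
    coeff n (genS {a, b} * completeSeries {a, b} {c, d}) = coeff n (genS {c, d} * 1) := by
  rw [genS_mul_completeSeries, mul_one]

theorem coeff_one_completeSeries_pair_pair :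
    coeff 1 (completeSeries {a, b} {c, d}) = a + b - c - d := by
  have h := coeff_genS_pair_mul_completeSeries a b c d 1
  rw [coeff_genS_pair_mul, coeff_genS_pair_mul] at h
  norm_num [constantCoeff_completeSeries, coeff_one] at h
  linear_combination h

theorem coeff_two_completeSeries_pair_pair :
    coeff 2 (completeSeries {a, b} {c, d})
      = a ^ 2 + a * b + b ^ 2 - (a + b) * (c + d) + c * d := by
  have h := coeff_genS_pair_mul_completeSeries a b c d 2
  rw [coeff_genS_pair_mul, coeff_genS_pair_mul] at h
  norm_num [constantCoeff_completeSeries, coeff_one] at h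
  linear_combination h + (a + b) * coeff_one_completeSeries_pair_pair a b c d

theorem coeff_completeSeries_pair_pair_recurrence (n : ℕ) :
    coeff (n + 3) (completeSeries {a, b} {c, d})
      = (a + b) * coeff (n + 2) (completeSeries {a, b} {c, d})
        - a * b * coeff (n + 1) (completeSeries {a, b} {c, d}) := by
  have h := coeff_genS_pair_mul_completeSeries a b c d (n + 3)
  rw [coeff_genS_pair_mul, coeff_genS_pair_mul] at h
  norm_num [coeff_one, show n + 3 - 2 = n + 1 by omega] at h
  linear_combination h

theorem SchurD_pair_pair_rectangle (r : ℕ) (hr : 2 ≤ r) :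
    SchurD {a, b} {c, d} (fun _ : Fin 2 => r) = (a * b) ^ (r - 2) * Res {a, b} {c, d} := by
  obtain ⟨n, rfl⟩ : ∃ n, r = n + 2 := ⟨r - 2, by omega⟩
  have casoratian := casoratian_of_recurrence
    (s := fun k => coeff (k + 1) (completeSeries {a, b} {c, d}))
    (coeff_completeSeries_pair_pair_recurrence a b c d) n
  beta_reduce at casoratian
  rw [SchurD_two_rows, Nat.add_sub_cancel, casoratian,
    coeff_completeSeries_pair_pair_recurrence a b c d 0, coeff_two_completeSeries_pair_pair,
    coeff_one_completeSeries_pair_pair, Res_pair_pair]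
  ring

end PairPair

end

/-- For `r ≥ 2`,
`S_{(r,r)}({x_2, 3x_1} − {2x_2, x_1+x_2}) = −3^{r−2}(x_2 − 2x_1)(x_1 x_2)^{r−1}(3x_1 − 2x_2)`,
where `x_1, x_2` are indeterminates. -/
theorem schur_rr_specialization (r : ℕ) (hr : 2 ≤ r) :
    letI R := MvPolynomial (Fin 2) ℤ
    letI x1 : R := MvPolynomial.X 0
    letI x2 : R := MvPolynomial.X 1
    SchurD ({x2, 3 * x1} : Multiset R) ({2 * x2, x1 + x2} : Multiset R)
        (fun _ : Fin 2 => r)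
      = -(3 : R) ^ (r - 2) * (x2 - 2 * x1) * (x1 * x2) ^ (r - 1) * (3 * x1 - 2 * x2) := by
  rw [SchurD_pair_pair_rectangle _ _ _ _ r hr, Res_pair_pair]
  obtain ⟨n, rfl⟩ : ∃ n, r = n + 2 := ⟨r - 2, by omega⟩
  rw [Nat.add_sub_cancel, show n + 2 - 1 = n + 1 by omega]
  ring

end
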